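/- arXiv:1901.00139 — 2 statements merged into one kernel-verified Lean document; each statement's English description precedes it below -/
import Mathlib

section
/- Let C ≥ 1 and let f_1,…,f_C : ℝ^d → [0,∞) be measurable functions such that f := ∏_{c=1}^C f_c is Lebesgue-integrable. For each c let p_c : ℝ^d × ℝ^d → [0,∞) be measurable and satisfy the invariance equation ∫_{ℝ^d} f_c(x)² p_c(x,y) dx = f_c(y)² for (Lebesgue-)almost every y ∈ ℝ^d. Define g(x^{(1)},…,x^{(C)},y) := ∏_{c=1}^C [ f_c(x^{(c)})² · p_c(x^{(c)},y) / f_c(y) ] on the set where f_c(y) > 0 for all c (and 0 otherwise). Then for almost every y with f_c(y) > 0 for all c, the iterated integral ∫_{ℝ^{Cd}} g(x^{(1)},…,x^{(C)},y) dx^{(1)}⋯dx^{(C)} equals ∏_{c=1}^C f_c(y) = f(y); consequently g is integrable on ℝ^{(C+1)d} with total integral ∫_{ℝ^d} f(y) dy, i.e. the (C+1)d-dimensional density proportional to g admits the marginal density proportional to f in the coordinate y. -/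
/-!
Fix `y` with all `f_c(y) > 0`. The invariance equation says that `x ↦ f_c(x)² p_c(x, y)` has
integral `f_c(y)²`, so after dividing by `f_c(y)` it is integrable with integral `f_c(y)`. The
fibre of `g` over `y` is a product of such functions in independent coordinates, hence by Fubini
on `(ℝ^d)^C` it integrates to `∏_c f_c(y)`; when some `f_c(y)` vanishes both sides are `0`.
Since `g ≥ 0`, fibres integrating to the integrable function `f` make `g` integrable, and Fubini
in the `y` coordinate gives `∫ g = ∫ f`.
-/

open MeasureTheory

theorem integrable_div_and_integral_div_eq_of_integral_eq_sq {X : Type*} [MeasurableSpace X]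
    {μ : Measure X} {φ : X → ℝ} {b : ℝ} (hb : b ≠ 0) (hφ : ∫ x, φ x ∂μ = b ^ 2) :
    Integrable (fun x => φ x / b) μ ∧ ∫ x, φ x / b ∂μ = b := by
  have hφ_int : Integrable φ μ := Integrable.of_integral_ne_zero (by rw [hφ]; positivity)
  refine ⟨hφ_int.div_const b, ?_⟩
  rw [integral_div, hφ, sq, mul_div_cancel_right₀ _ hb]

theorem integrable_and_integral_pi_prod_div_eq_prod {ι X : Type*} [Fintype ι]
    [MeasurableSpace X] {μ : Measure X} [SigmaFinite μ] {φ : ι → X → ℝ} {b : ι → ℝ}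
    (hb : ∀ i, b i ≠ 0) (hφ : ∀ i, ∫ x, φ i x ∂μ = b i ^ 2) :
    Integrable (fun x : ι → X => ∏ i, φ i (x i) / b i) (Measure.pi fun _ => μ) ∧
      ∫ x : ι → X, ∏ i, φ i (x i) / b i ∂(Measure.pi fun _ => μ) = ∏ i, b i := by
  have hfactor i := integrable_div_and_integral_div_eq_of_integral_eq_sq (hb i) (hφ i)
  refine ⟨Integrable.fintype_prod fun i => (hfactor i).1, ?_⟩
  rw [integral_fintype_prod_eq_prod (fun i x => φ i x / b i)]
  exact Finset.prod_congr rfl fun i _ => (hfactor i).2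

theorem integrable_and_integral_pi_ite_prod_div_eq_prod {ι X : Type*} [Fintype ι]
    [MeasurableSpace X] {μ : Measure X} [SigmaFinite μ] {φ : ι → X → ℝ} {b : ι → ℝ}
    [Decidable (∀ i, 0 < b i)] (hb : ∀ i, 0 ≤ b i) (hφ : ∀ i, ∫ x, φ i x ∂μ = b i ^ 2) :
    Integrable (fun x : ι → X => if ∀ i, 0 < b i then ∏ i, φ i (x i) / b i else 0)
        (Measure.pi fun _ => μ) ∧
      ∫ x : ι → X, (if ∀ i, 0 < b i then ∏ i, φ i (x i) / b i else 0)
        ∂(Measure.pi fun _ => μ) = ∏ i, b i := by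
  by_cases hpos : ∀ i, 0 < b i
  · simp only [if_pos hpos]
    exact integrable_and_integral_pi_prod_div_eq_prod (fun i => (hpos i).ne') hφ
  · obtain ⟨i, hi⟩ := not_forall.1 hpos
    simp only [if_neg hpos, integral_zero]
    exact ⟨integrable_zero _ _ _,
      (Finset.prod_eq_zero (Finset.mem_univ i) (le_antisymm (not_lt.1 hi) (hb i))).symm⟩

theorem integrable_and_integral_eq_of_ae_integral_fiber_eq {α β : Type*} [MeasurableSpace α]
    [MeasurableSpace β] {μ : Measure α} {ν : Measure β} [SFinite μ] [SFinite ν]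
    {g : α × β → ℝ} {F : β → ℝ} (hg_nonneg : 0 ≤ g)
    (hg_meas : AEStronglyMeasurable g (μ.prod ν)) (hF : Integrable F ν)
    (hfiber : ∀ᵐ y ∂ν, Integrable (fun x => g (x, y)) μ ∧ ∫ x, g (x, y) ∂μ = F y) :
    Integrable g (μ.prod ν) ∧ ∫ z, g z ∂(μ.prod ν) = ∫ y, F y ∂ν := by
  have hg_int : Integrable g (μ.prod ν) := by
    refine (integrable_prod_iff' hg_meas).2 ⟨hfiber.mono fun y hy => hy.1, hF.congr ?_⟩
    filter_upwards [hfiber] with y hy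
    simp only [Real.norm_of_nonneg (hg_nonneg _), hy.2]
  refine ⟨hg_int, ?_⟩
  rw [integral_prod_symm g hg_int]
  exact integral_congr_ae (hfiber.mono fun y hy => hy.2)

theorem monte_carlo_fusion_extended_density_general
    {d C : ℕ}
    (f : Fin C → EuclideanSpace ℝ (Fin d) → ℝ)
    (hf_meas : ∀ c, Measurable (f c))
    (hf_nonneg : ∀ c x, 0 ≤ f c x)
    (hf_int : Integrable (fun y : EuclideanSpace ℝ (Fin d) => ∏ c, f c y))
    (p : Fin C → EuclideanSpace ℝ (Fin d) → EuclideanSpace ℝ (Fin d) → ℝ)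
    (hp_meas : ∀ c, Measurable
      (fun q : EuclideanSpace ℝ (Fin d) × EuclideanSpace ℝ (Fin d) => p c q.1 q.2))
    (hp_nonneg : ∀ c x y, 0 ≤ p c x y)
    (hp_inv : ∀ c, ∀ᵐ y : EuclideanSpace ℝ (Fin d),
      ∫ x, (f c x) ^ 2 * p c x y = (f c y) ^ 2)
    (g : (Fin C → EuclideanSpace ℝ (Fin d)) × EuclideanSpace ℝ (Fin d) → ℝ)
    (hg : g = fun z =>
      if ∀ c, 0 < f c z.2 then ∏ c, (f c (z.1 c)) ^ 2 * p c (z.1 c) z.2 / f c z.2 else 0) :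
    (∀ᵐ y : EuclideanSpace ℝ (Fin d), (∀ c, 0 < f c y) →
        ∫ x : Fin C → EuclideanSpace ℝ (Fin d), g (x, y) = ∏ c, f c y) ∧
      Integrable g ∧
      ∫ z, g z = ∫ y : EuclideanSpace ℝ (Fin d), ∏ c, f c y := by
  have hg_nonneg : 0 ≤ g := by
    intro z
    rw [hg]
    dsimp only
    split_ifs with hpos
    · exact Finset.prod_nonneg fun c _ =>
        div_nonneg (mul_nonneg (sq_nonneg _) (hp_nonneg c _ _)) (hpos c).le
    · exact le_rfl
  have hg_meas : Measurable g := by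
    rw [hg]
    refine Measurable.ite ?_ ?_ measurable_const
    · exact measurableSet_setOfPred.2 <| Measurable.forall fun c =>
        measurable_const.lt ((hf_meas c).comp measurable_snd)
    · fun_prop
  have hfiber : ∀ᵐ y : EuclideanSpace ℝ (Fin d),
      Integrable (fun x => g (x, y)) ∧ ∫ x, g (x, y) = ∏ c, f c y := by
    filter_upwards [ae_all_iff.2 hp_inv] with y hy
    subst hg
    exact integrable_and_integral_pi_ite_prod_div_eq_prod (fun c => hf_nonneg c y) hy
  obtain ⟨hg_int, hg_integral⟩ := integrable_and_integral_eq_of_ae_integral_fiber_eq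
    hg_nonneg hg_meas.aestronglyMeasurable hf_int hfiber
  rw [Measure.volume_eq_prod]
  exact ⟨hfiber.mono fun y hy _ => hy.2, hg_int, hg_integral⟩

/-- **Proposition 1 of "Monte Carlo Fusion"** (extended fusion density).
Let `f := ∏_c f_c` be integrable, with each sub-posterior `f_c : ℝ^d → [0,∞)` measurable,
and let each `p_c` be a measurable nonnegative transition kernel satisfying the invariance
equation `∫ f_c(x)² p_c(x,y) dx = f_c(y)²` for a.e. `y`.  Define
`g(x⁽¹⁾,…,x⁽ᶜ⁾,y) := ∏_c f_c(x⁽ᶜ⁾)² p_c(x⁽ᶜ⁾,y)/f_c(y)` where all `f_c(y) > 0`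
(and `0` otherwise).  Then for a.e. `y` with all `f_c(y) > 0` the iterated integral over
`(x⁽¹⁾,…,x⁽ᶜ⁾)` of `g` equals `∏_c f_c(y) = f(y)`; consequently `g` is integrable on
`ℝ^{(C+1)d}` with total integral `∫ f(y) dy`, i.e. the extended density proportional to `g`
admits the marginal density proportional to `f` in the coordinate `y`. -/
theorem monte_carlo_fusion_extended_density
    {d C : ℕ} (hC : 1 ≤ C)
    (f : Fin C → EuclideanSpace ℝ (Fin d) → ℝ)
    (hf_meas : ∀ c, Measurable (f c))
    (hf_nonneg : ∀ c x, 0 ≤ f c x)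
    (hf_int : Integrable (fun y : EuclideanSpace ℝ (Fin d) => ∏ c, f c y))
    (p : Fin C → EuclideanSpace ℝ (Fin d) → EuclideanSpace ℝ (Fin d) → ℝ)
    (hp_meas : ∀ c, Measurable
      (fun q : EuclideanSpace ℝ (Fin d) × EuclideanSpace ℝ (Fin d) => p c q.1 q.2))
    (hp_nonneg : ∀ c x y, 0 ≤ p c x y)
    (hp_inv : ∀ c, ∀ᵐ y : EuclideanSpace ℝ (Fin d),
      ∫ x, (f c x) ^ 2 * p c x y = (f c y) ^ 2)
    (g : (Fin C → EuclideanSpace ℝ (Fin d)) × EuclideanSpace ℝ (Fin d) → ℝ)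
    (hg : g = fun z =>
      if ∀ c, 0 < f c z.2 then ∏ c, (f c (z.1 c)) ^ 2 * p c (z.1 c) z.2 / f c z.2 else 0) :
    (∀ᵐ y : EuclideanSpace ℝ (Fin d), (∀ c, 0 < f c y) →
        ∫ x : Fin C → EuclideanSpace ℝ (Fin d), g (x, y) = ∏ c, f c y) ∧
      Integrable g ∧
      ∫ z, g z = ∫ y : EuclideanSpace ℝ (Fin d), ∏ c, f c y :=
  monte_carlo_fusion_extended_density_general f hf_meas hf_nonneg hf_int p hp_meas hp_nonneg hp_inv
    g hg
end

section
/- Let C ≥ 1, T > 0, let f_1,…,f_C : ℝ^d → (0,∞) be functions, and let p_1,…,p_C, q_1,…,q_C : ℝ^d × ℝ^d → ℝ be functions such that for each c and all x, y: p_c(x,y) = (f_c(y)/f_c(x)) · (2πT)^{-d/2} · exp(−‖y−x‖²/(2T)) · q_c(x,y). Define g(x^{(1)},…,x^{(C)},y) := ∏_{c=1}^C [ f_c(x^{(c)})² · p_c(x^{(c)},y) / f_c(y) ] and h(x^{(1)},…,x^{(C)},y) := ∏_{c=1}^C f_c(x^{(c)}) · exp(−C‖y−x̄‖²/(2T)),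 where x̄ := C^{-1}∑_c x^{(c)}. Then for all x^{(1)},…,x^{(C)}, y ∈ ℝ^d: g(x^{(1)},…,x^{(C)},y) / h(x^{(1)},…,x^{(C)},y) = (2πT)^{-Cd/2} · exp(−Cσ²/(2T)) · ∏_{c=1}^C q_c(x^{(c)},y), where σ² := C^{-1} ∑_{c=1}^C ‖x^{(c)} − x̄‖². -/
open Real Finset

/-! Each factor of the target carries the Gaussian kernel `exp (-‖y - x⁽ᶜ⁾‖² / (2T))`, while the
functions `f_c` cancel against the proposal. By the parallel-axis (Steiner) identity
`∑_c ‖y - x⁽ᶜ⁾‖² = C ‖y - x̄‖² + ∑_c ‖x⁽ᶜ⁾ - x̄‖²`, the product of these kernels is the proposal's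
Gaussian `exp (-C ‖y - x̄‖² / (2T))` times `exp (-C σ² / (2T))`, which leaves exactly the
normalising constants, the first acceptance probability and the product of the `q_c`. -/

namespace Finset

variable {ι E : Type*} [NormedAddCommGroup E] [InnerProductSpace ℝ E]

lemma sum_sub_centroid_eq_zero (s : Finset ι) (x : ι → E) :
    ∑ i ∈ s, (x i - (#s : ℝ)⁻¹ • ∑ j ∈ s, x j) = 0 := by
  rcases s.eq_empty_or_nonempty with rfl | hs
  · simp
  rw [sum_sub_distrib, sum_const, ← Nat.cast_smul_eq_nsmul ℝ, smul_smul,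
    mul_inv_cancel₀ (by exact_mod_cast hs.card_pos.ne'), one_smul, sub_self]

lemma sum_norm_sub_sq_eq_card_mul_add (s : Finset ι) (x : ι → E) (y : E) :
    ∑ i ∈ s, ‖y - x i‖ ^ 2 =
      #s * ‖y - (#s : ℝ)⁻¹ • ∑ j ∈ s, x j‖ ^ 2 +
        ∑ i ∈ s, ‖x i - (#s : ℝ)⁻¹ • ∑ j ∈ s, x j‖ ^ 2 := by
  set m := (#s : ℝ)⁻¹ • ∑ j ∈ s, x j
  have hsplit : ∀ i, ‖y - x i‖ ^ 2 =
      ‖y - m‖ ^ 2 - 2 * inner ℝ (y - m) (x i - m) + ‖x i - m‖ ^ 2 := fun i => by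
    rw [← norm_sub_sq_real, sub_sub_sub_cancel_right]
  rw [sum_congr rfl fun i _ => hsplit i, sum_add_distrib, sum_sub_distrib, ← mul_sum,
    ← inner_sum, sum_sub_centroid_eq_zero, inner_zero_right, sum_const, nsmul_eq_mul]
  ring

lemma card_mul_inv_card_mul_sum (s : Finset ι) (g : ι → ℝ) :
    (#s : ℝ) * ((#s : ℝ)⁻¹ * ∑ i ∈ s, g i) = ∑ i ∈ s, g i := by
  rcases s.eq_empty_or_nonempty with rfl | hs
  · simp
  exact mul_inv_cancel_left₀ (by exact_mod_cast hs.card_pos.ne') _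

lemma prod_exp_neg_norm_sub_sq_div (s : Finset ι) (x : ι → E) (y : E) (T : ℝ) :
    ∏ i ∈ s, exp (-‖y - x i‖ ^ 2 / (2 * T)) =
      exp (-((#s : ℝ) * ((#s : ℝ)⁻¹ * ∑ i ∈ s, ‖x i - (#s : ℝ)⁻¹ • ∑ j ∈ s, x j‖ ^ 2)) /
          (2 * T)) *
        exp (-((#s : ℝ) * ‖y - (#s : ℝ)⁻¹ • ∑ j ∈ s, x j‖ ^ 2) / (2 * T)) := by
  rw [← exp_sum, ← exp_add, card_mul_inv_card_mul_sum, ← sum_div, sum_neg_distrib,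
    sum_norm_sub_sq_eq_card_mul_add]
  ring_nf

end Finset

theorem monte_carlo_fusion_brownian_ratio_general
    {d C : ℕ} (T : ℝ) (hT : 0 < T)
    (f : Fin C → EuclideanSpace ℝ (Fin d) → ℝ)
    (hf : ∀ c x, 0 < f c x)
    (p q : Fin C → EuclideanSpace ℝ (Fin d) → EuclideanSpace ℝ (Fin d) → ℝ)
    (hpq : ∀ c (x y : EuclideanSpace ℝ (Fin d)),
      p c x y = (f c y / f c x) * (2 * π * T) ^ (-(d : ℝ) / 2) *
        Real.exp (-‖y - x‖ ^ 2 / (2 * T)) * q c x y)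
    (x : Fin C → EuclideanSpace ℝ (Fin d)) (y : EuclideanSpace ℝ (Fin d)) :
    (∏ c, (f c (x c)) ^ 2 * p c (x c) y / f c y) /
      ((∏ c, f c (x c)) *
        Real.exp (-((C : ℝ) * ‖y - (C : ℝ)⁻¹ • ∑ c', x c'‖ ^ 2) / (2 * T))) =
    (2 * π * T) ^ (-((C : ℝ) * d) / 2) *
      Real.exp (-((C : ℝ) * ((C : ℝ)⁻¹ * ∑ c, ‖x c - (C : ℝ)⁻¹ • ∑ c', x c'‖ ^ 2)) / (2 * T)) *
      ∏ c, q c (x c) y := by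
  have hfactor : ∀ c, f c (x c) ^ 2 * p c (x c) y / f c y =
      f c (x c) * ((2 * π * T) ^ (-(d : ℝ) / 2) *
        (exp (-‖y - x c‖ ^ 2 / (2 * T)) * q c (x c) y)) := fun c => by
    rw [hpq]
    field_simp [(hf c (x c)).ne', (hf c y).ne']
  have hconst : ((2 * π * T) ^ (-(d : ℝ) / 2)) ^ C = (2 * π * T) ^ (-((C : ℝ) * d) / 2) := by
    rw [← rpow_mul_natCast (by positivity)]
    ring_nf
  have hfx : ∏ c, f c (x c) ≠ 0 := prod_ne_zero_iff.mpr fun c _ => (hf c (x c)).ne'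
  simp only [hfactor, prod_mul_distrib, prod_const, card_univ, Fintype.card_fin, hconst,
    prod_exp_neg_norm_sub_sq_div]
  field_simp

/-- **Algebraic content of Proposition 2 of "Monte Carlo Fusion"** (Brownian bridge fusion
rejection sampler): if each transition density `p_c` admits the Dacunha–Castelle
representation `p_c(x,y) = (f_c(y)/f_c(x)) (2πT)^{-d/2} exp(−‖y−x‖²/(2T)) q_c(x,y)`,
then the ratio of the extended fusion target
`g(x⁽¹⁾,…,x⁽ᶜ⁾,y) = ∏_c f_c(x⁽ᶜ⁾)² p_c(x⁽ᶜ⁾,y)/f_c(y)` to the proposal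
`h(x⁽¹⁾,…,x⁽ᶜ⁾,y) = (∏_c f_c(x⁽ᶜ⁾)) exp(−C‖y−x̄‖²/(2T))` equals
`(2πT)^{-Cd/2} · exp(−Cσ²/(2T)) · ∏_c q_c(x⁽ᶜ⁾,y)`, where `x̄` is the average of the
`x⁽ᶜ⁾` and `σ² = C⁻¹ ∑_c ‖x⁽ᶜ⁾ − x̄‖²`. -/
theorem monte_carlo_fusion_brownian_ratio
    {d C : ℕ} (hC : 1 ≤ C) (T : ℝ) (hT : 0 < T)
    (f : Fin C → EuclideanSpace ℝ (Fin d) → ℝ)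
    (hf : ∀ c x, 0 < f c x)
    (p q : Fin C → EuclideanSpace ℝ (Fin d) → EuclideanSpace ℝ (Fin d) → ℝ)
    (hpq : ∀ c (x y : EuclideanSpace ℝ (Fin d)),
      p c x y = (f c y / f c x) * (2 * π * T) ^ (-(d : ℝ) / 2) *
        Real.exp (-‖y - x‖ ^ 2 / (2 * T)) * q c x y)
    (x : Fin C → EuclideanSpace ℝ (Fin d)) (y : EuclideanSpace ℝ (Fin d)) :
    (∏ c, (f c (x c)) ^ 2 * p c (x c) y / f c y) /
      ((∏ c, f c (x c)) *
        Real.exp (-((C : ℝ) * ‖y - (C : ℝ)⁻¹ • ∑ c', x c'‖ ^ 2) / (2 * T))) =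
    (2 * π * T) ^ (-((C : ℝ) * d) / 2) *
      Real.exp (-((C : ℝ) * ((C : ℝ)⁻¹ * ∑ c, ‖x c - (C : ℝ)⁻¹ • ∑ c', x c'‖ ^ 2)) / (2 * T)) *
      ∏ c, q c (x c) y :=
  monte_carlo_fusion_brownian_ratio_general T hT f hf p q hpq x y
end
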